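/- arXiv:1810.03675 — 4 statements merged into one kernel-verified Lean document; each statement's English description precedes it below -/
import Mathlib

section
/- (Remak) If z₁, …, z_n are non-zero complex numbers arranged so that |z₁| ≤ |z₂| ≤ ⋯ ≤ |z_n|, then ∏_{1 ≤ i < j ≤ n} |1 − z_i/z_j|² ≤ nⁿ. -/
open Finset Matrix
open scoped ComplexOrder

/-!
Write `r l = |z l|` and `w j = ∏_{l<j} r l`. The product equals `|det V / ∏ z_j^j|²` for the
Vandermonde matrix `V = (z_i^j)`. Rescaling row `i` by `w i / z_i^i` and column `j` by `1 / w j`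
turns `V / ∏ z_j^j` into a matrix `B` with the same determinant whose entries have modulus
`∏_{l<j} (r_i / r_l) / ∏_{l<i} (r_i / r_l) ≤ 1`: as a function of `j` the partial products of
the ratios `r_i / r_l`, which are `≥ 1` for `l < i` and `≤ 1` for `l ≥ i`, peak at `j = i`.
Finally `|det B|² = det (BᴴB)` is at most `(tr (BᴴB) / n)ⁿ ≤ nⁿ` by AM-GM on the eigenvalues.
-/

theorem Real.prod_le_sum_div_card_pow {ι : Type*} (s : Finset ι) {f : ι → ℝ}
    (hf : ∀ i ∈ s, 0 ≤ f i) : ∏ i ∈ s, f i ≤ ((∑ i ∈ s, f i) / #s) ^ #s := by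
  rcases s.eq_empty_or_nonempty with rfl | hs
  · simp
  have hcard : (#s : ℝ) ≠ 0 := Nat.cast_ne_zero.2 hs.card_pos.ne'
  have amgm := Real.geom_mean_le_arith_mean_weighted s (fun _ ↦ (#s : ℝ)⁻¹) f
    (fun _ _ ↦ by positivity) (by simp [hcard]) hf
  rw [← Finset.mul_sum, inv_mul_eq_div, Real.finsetProd_rpow s f hf] at amgm
  calc ∏ i ∈ s, f i = ((∏ i ∈ s, f i) ^ (#s : ℝ)⁻¹) ^ #s := by
        rw [← Real.rpow_natCast, ← Real.rpow_mul (prod_nonneg hf), inv_mul_cancel₀ hcard,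
          Real.rpow_one]
    _ ≤ ((∑ i ∈ s, f i) / #s) ^ #s :=
        pow_le_pow_left₀ (Real.rpow_nonneg (prod_nonneg hf) _) amgm _

theorem Matrix.norm_det_sq_le_sum_div_card_pow {ι 𝕜 : Type*} [Fintype ι] [DecidableEq ι]
    [RCLike 𝕜] (A : Matrix ι ι 𝕜) :
    ‖A.det‖ ^ 2 ≤ ((∑ i, ∑ j, ‖A i j‖ ^ 2) / Fintype.card ι) ^ Fintype.card ι := by
  have hH : (Aᴴ * A).PosSemidef := posSemidef_conjTranspose_mul_self A
  set μ := hH.isHermitian.eigenvalues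
  have hdet : ‖A.det‖ ^ 2 = ∏ i, μ i := by
    have h : ((‖A.det‖ ^ 2 : ℝ) : 𝕜) = ((∏ i, μ i : ℝ) : 𝕜) := by
      rw [RCLike.ofReal_prod, ← hH.isHermitian.det_eq_prod_eigenvalues, det_mul,
        det_conjTranspose, RCLike.ofReal_pow, ← RCLike.conj_mul]
      rfl
    exact_mod_cast h
  have htr : ∑ i, μ i = ∑ i, ∑ j, ‖A i j‖ ^ 2 := by
    have h : ((∑ i, μ i : ℝ) : 𝕜) = ((∑ j, ∑ i, ‖A i j‖ ^ 2 : ℝ) : 𝕜) := by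
      rw [RCLike.ofReal_sum, ← hH.isHermitian.trace_eq_sum_eigenvalues]
      simp only [trace, diag, mul_apply, conjTranspose_apply, RCLike.ofReal_sum,
        RCLike.ofReal_pow, ← RCLike.conj_mul]
      rfl
    rw [Finset.sum_comm] at h
    exact_mod_cast h
  rw [hdet, ← htr, ← card_univ]
  exact Real.prod_le_sum_div_card_pow univ fun i _ ↦ hH.eigenvalues_nonneg i

theorem Matrix.norm_det_sq_le_card_pow {ι 𝕜 : Type*} [Fintype ι] [DecidableEq ι]
    [RCLike 𝕜] {A : Matrix ι ι 𝕜} (hA : ∀ i j, ‖A i j‖ ≤ 1) :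
    ‖A.det‖ ^ 2 ≤ (Fintype.card ι : ℝ) ^ Fintype.card ι := by
  refine (norm_det_sq_le_sum_div_card_pow A).trans (pow_le_pow_left₀ ?_ ?_ _)
  · positivity
  refine div_le_of_le_mul₀ (by positivity) (by positivity) ?_
  calc ∑ i, ∑ j, ‖A i j‖ ^ 2 ≤ ∑ _i : ι, ∑ _j : ι, (1 : ℝ) := by
        gcongr with i _ j _
        exact pow_le_one₀ (norm_nonneg _) (hA i j)
    _ = Fintype.card ι * Fintype.card ι := by simp

theorem Finset.prod_Iio_le_prod_Iio_of_one_le_of_le_one {α R : Type*} [LinearOrder α]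
    [LocallyFiniteOrderBot α] [CommSemiring R] [PartialOrder R] [IsOrderedRing R]
    {f : α → R} {i : α} (h0 : ∀ l, 0 ≤ f l) (hlt : ∀ l < i, 1 ≤ f l)
    (hge : ∀ l, i ≤ l → f l ≤ 1) (j : α) :
    ∏ l ∈ Iio j, f l ≤ ∏ l ∈ Iio i, f l := by
  rcases le_total j i with hji | hij
  · rw [← prod_sdiff (Iio_subset_Iio hji)]
    refine le_mul_of_one_le_left (prod_nonneg fun l _ ↦ h0 l) (one_le_prod fun l hl ↦ hlt l ?_)
    exact mem_Iio.1 (mem_sdiff.1 hl).1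
  · rw [← prod_sdiff (Iio_subset_Iio hij)]
    refine mul_le_of_le_one_left (prod_nonneg fun l _ ↦ h0 l)
      (prod_le_one (fun l _ ↦ h0 l) fun l hl ↦ hge l ?_)
    simpa using (mem_sdiff.1 hl).2

theorem Finset.prod_filter_lt_eq_prod_prod_Ioi {α M : Type*} [Fintype α] [LinearOrder α]
    [LocallyFiniteOrderTop α] [CommMonoid M] (f : α → α → M) :
    ∏ p ∈ univ.filter (fun p : α × α ↦ p.1 < p.2), f p.1 p.2 = ∏ i, ∏ j ∈ Ioi i, f i j :=
  prod_finset_product' _ _ _ fun p ↦ by simp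

theorem Fin.prod_prod_Ioi_eq_prod_pow {n : ℕ} {M : Type*} [CommMonoid M] (f : Fin n → M) :
    ∏ i, ∏ j ∈ Ioi i, f j = ∏ j, f j ^ (j : ℕ) := by
  rw [prod_comm' (t' := univ) (s' := Iio) (fun i j ↦ by simp)]
  simp

theorem Matrix.det_vandermonde_div_prod_pow {n : ℕ} {K : Type*} [Field K] {v : Fin n → K}
    (hv : ∀ i, v i ≠ 0) :
    (vandermonde v).det / ∏ j, v j ^ (j : ℕ) = ∏ i, ∏ j ∈ Ioi i, (1 - v i / v j) := by
  have h : ∀ i j, 1 - v i / v j = (v j - v i) / v j := fun i j ↦ by field_simp [hv j]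
  simp_rw [h, prod_div_distrib, det_vandermonde, Fin.prod_prod_Ioi_eq_prod_pow]

section Remak

variable {n : ℕ}

noncomputable def remakMatrix (z : Fin n → ℂ) : Matrix (Fin n) (Fin n) ℂ :=
  diagonal (fun i ↦ (∏ l ∈ Iio i, ‖z l‖ : ℝ) / z i ^ (i : ℕ)) * vandermonde z *
    diagonal (fun j ↦ ((∏ l ∈ Iio j, ‖z l‖ : ℝ) : ℂ)⁻¹)

variable {z : Fin n → ℂ}

theorem det_remakMatrix (hz : ∀ i, z i ≠ 0) :
    (remakMatrix z).det = (vandermonde z).det / ∏ i, z i ^ (i : ℕ) := by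
  have hw : ∏ j : Fin n, ((∏ l ∈ Iio j, ‖z l‖ : ℝ) : ℂ) ≠ 0 := prod_ne_zero_iff.2 fun j _ ↦ by
    exact_mod_cast (prod_pos fun l _ ↦ norm_pos_iff.2 (hz l)).ne'
  have hp : ∏ i, z i ^ (i : ℕ) ≠ 0 := prod_ne_zero_iff.2 fun i _ ↦ pow_ne_zero _ (hz i)
  rw [remakMatrix, det_mul, det_mul, det_diagonal, det_diagonal, prod_div_distrib,
    prod_inv_distrib]
  field_simp

theorem norm_remakMatrix_apply_le_one (hz : ∀ i, z i ≠ 0)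
    (hmono : ∀ i j : Fin n, i ≤ j → ‖z i‖ ≤ ‖z j‖) (i j : Fin n) :
    ‖remakMatrix z i j‖ ≤ 1 := by
  have hr : ∀ l, 0 < ‖z l‖ := fun l ↦ norm_pos_iff.2 (hz l)
  have hratio (k : Fin n) :
      ‖z i‖ ^ (k : ℕ) / ∏ l ∈ Iio k, ‖z l‖ = ∏ l ∈ Iio k, ‖z i‖ / ‖z l‖ := by
    rw [prod_div_distrib, prod_const, Fin.card_Iio]
  have hentry : ‖remakMatrix z i j‖ =
      (∏ l ∈ Iio j, ‖z i‖ / ‖z l‖) / ∏ l ∈ Iio i, ‖z i‖ / ‖z l‖ := by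
    rw [← hratio, ← hratio, remakMatrix, mul_diagonal, diagonal_mul, vandermonde_apply]
    simp only [norm_mul, norm_div, norm_inv, norm_pow, Complex.norm_real, Real.norm_eq_abs,
      abs_of_pos (prod_pos fun l _ ↦ hr l)]
    field_simp
  rw [hentry]
  refine div_le_one_of_le₀ ?_ (prod_nonneg fun l _ ↦ (div_pos (hr i) (hr l)).le)
  exact prod_Iio_le_prod_Iio_of_one_le_of_le_one (fun l ↦ (div_pos (hr i) (hr l)).le)
    (fun l hl ↦ (one_le_div (hr l)).2 (hmono l i hl.le))
    (fun l hl ↦ (div_le_one (hr l)).2 (hmono i l hl)) j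

end Remak

/-- **Remak's inequality** for complex numbers: if `z₁,…,zₙ` are nonzero complex
numbers with `|z₁| ≤ ⋯ ≤ |zₙ|`, then `∏_{i<j} |1 − zᵢ/zⱼ|² ≤ nⁿ`. -/
theorem remak_prod_bound (n : ℕ) (z : Fin n → ℂ)
    (hz : ∀ i, z i ≠ 0)
    (hmono : ∀ i j : Fin n, i ≤ j → ‖z i‖ ≤ ‖z j‖) :
    (∏ p ∈ Finset.univ.filter (fun p : Fin n × Fin n => p.1 < p.2),
      ‖1 - z p.1 / z p.2‖ ^ 2) ≤ (n : ℝ) ^ n := by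
  calc _ = ‖∏ i, ∏ j ∈ Ioi i, (1 - z i / z j)‖ ^ 2 := by
        rw [prod_filter_lt_eq_prod_prod_Ioi (fun i j ↦ ‖1 - z i / z j‖ ^ 2)]
        simp only [norm_prod, prod_pow]
    _ = ‖(remakMatrix z).det‖ ^ 2 := by
        rw [det_remakMatrix hz, det_vandermonde_div_prod_pow hz]
    _ ≤ (n : ℝ) ^ n := by
        simpa using norm_det_sq_le_card_pow (norm_remakMatrix_apply_le_one hz hmono)
end

section
/- For all real numbers a, b > 0 and all real θ, the inequality (1 − cos²θ)^a · (1 − cos θ)^b ≤ 2^{2a+b} · a^a · (a+b)^{a+b} / (2a+b)^{2a+b} holds. -/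
/-!
Writing `c = cos θ`, the left side is `(1 - c) ^ (a + b) * (1 + c) ^ a`, a product of powers of two
nonnegative numbers with sum `2`. By weighted AM-GM, `u ^ p * v ^ q` with `u + v` fixed is largest at
`u : v = p : q`, which gives exactly the right side.
-/

open Real

namespace Real

/-- Weighted AM-GM with weights `p / (p + q)` and `q / (p + q)` at `u / p` and `v / q`, raised to the
power `p + q`. -/
theorem div_rpow_self_mul_div_rpow_self_le {u v p q : ℝ} (hu : 0 ≤ u) (hv : 0 ≤ v) (hp : 0 < p)
    (hq : 0 < q) : (u / p) ^ p * (v / q) ^ q ≤ ((u + v) / (p + q)) ^ (p + q) := by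
  have hs : 0 < p + q := by linarith
  have hamgm : (u / p) ^ (p / (p + q)) * (v / q) ^ (q / (p + q)) ≤ (u + v) / (p + q) := by
    calc (u / p) ^ (p / (p + q)) * (v / q) ^ (q / (p + q))
        ≤ p / (p + q) * (u / p) + q / (p + q) * (v / q) :=
          geom_mean_le_arith_mean2_weighted (by positivity) (by positivity) (by positivity)
            (by positivity) (by field_simp)
      _ = (u + v) / (p + q) := by field_simp
  have hpow_div_mul {x : ℝ} (hx : 0 ≤ x) (r : ℝ) : (x ^ (r / (p + q))) ^ (p + q) = x ^ r := by
    rw [← rpow_mul hx, div_mul_cancel₀ r hs.ne']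
  calc (u / p) ^ p * (v / q) ^ q
      = ((u / p) ^ (p / (p + q)) * (v / q) ^ (q / (p + q))) ^ (p + q) := by
        rw [mul_rpow (by positivity) (by positivity), hpow_div_mul (by positivity),
          hpow_div_mul (by positivity)]
    _ ≤ ((u + v) / (p + q)) ^ (p + q) := rpow_le_rpow (by positivity) hamgm hs.le

theorem rpow_mul_rpow_le_add_rpow {u v p q : ℝ} (hu : 0 ≤ u) (hv : 0 ≤ v) (hp : 0 < p)
    (hq : 0 < q) :
    u ^ p * v ^ q ≤ p ^ p * q ^ q * (u + v) ^ (p + q) / (p + q) ^ (p + q) := by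
  have h := div_rpow_self_mul_div_rpow_self_le hu hv hp hq
  rw [div_rpow hu hp.le, div_rpow hv hq.le, div_rpow (by positivity) (by positivity)] at h
  rw [le_div_iff₀ (rpow_pos_of_pos (by positivity) _)]
  rw [div_mul_div_comm, div_le_div_iff₀ (by positivity) (rpow_pos_of_pos (by positivity) _)] at h
  linarith

end Real

theorem cos_rpow_inequality (a b θ : ℝ) (ha : 0 < a) (hb : 0 < b) :
    (1 - Real.cos θ ^ 2) ^ a * (1 - Real.cos θ) ^ b ≤
      2 ^ (2 * a + b) * a ^ a * (a + b) ^ (a + b) / (2 * a + b) ^ (2 * a + b) := by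
  have hu : 0 ≤ 1 - cos θ := by linarith [cos_le_one θ]
  have hv : 0 ≤ 1 + cos θ := by linarith [neg_one_le_cos θ]
  calc (1 - cos θ ^ 2) ^ a * (1 - cos θ) ^ b = (1 - cos θ) ^ (a + b) * (1 + cos θ) ^ a := by
        rw [show 1 - cos θ ^ 2 = (1 - cos θ) * (1 + cos θ) by ring, mul_rpow hu hv,
          rpow_add' hu (by positivity)]
        ring
    _ ≤ (a + b) ^ (a + b) * a ^ a * (1 - cos θ + (1 + cos θ)) ^ (a + b + a) /
          (a + b + a) ^ (a + b + a) := rpow_mul_rpow_le_add_rpow hu hv (by positivity) ha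
    _ = 2 ^ (2 * a + b) * a ^ a * (a + b) ^ (a + b) / (2 * a + b) ^ (2 * a + b) := by
        rw [show 1 - cos θ + (1 + cos θ) = 2 by ring, show a + b + a = 2 * a + b by ring]
        ring
end

section
/- Let θ ∈ ℝ and let c₁, …, c_r ∈ [−1, 1]. Let d₊ be the number of indices m with c_m > 0 and d₋ the number of indices m with c_m < 0. Set a := 1 + 2·min(d₊, d₋), b := 2·|d₊ − d₋| and f := 2·max(d₊, d₋). Then B_r := |1 − e^{−2iθ}|² · ∏_{m=1}^r |1 − c_m·e^{iθ}|⁴ satisfies B_r ≤ max( 4^{2a+b} · a^a · (a+b)^{a+b} / (2a+b)^{2a+b} , 4^{2+f} · (1+f)^{1+f} / (2+f)^{2+f} ). -/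
/-!
With `x = cos θ` one has `|1 - e^{-2iθ}|² = 2(1 - x) · 2(1 + x)` and
`|1 - c e^{iθ}|² = 1 - 2cx + c²`. Being convex in `c`, the latter is at most `max 1 (2(1 - x))`
for `c ∈ [0, 1]` and at most `max 1 (2(1 + x))` for `c ∈ [-1, 0]`. Writing `s = 2(1 - x)` and
`t = 2(1 + x)`, so that `s + t = 4`, it remains to bound `s t max(1,s)^{2d₊} max(1,t)^{2d₋}`:
if `s, t ≥ 1` this is `s^{1+2d₊} t^{1+2d₋}`, otherwise it is at most `s t^{1+f}` or `s^{1+f} t`,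
and weighted AM-GM gives `s^p t^q ≤ 4^{p+q} p^p q^q / (p+q)^{p+q}`.
-/

open Finset

theorem div_pow_mul_div_pow_le_add_div_pow {s t : ℝ} (hs : 0 ≤ s) (ht : 0 ≤ t) {p q : ℕ}
    (hp : 0 < p) (hq : 0 < q) :
    (s / p) ^ p * (t / q) ^ q ≤ ((s + t) / (p + q)) ^ (p + q) := by
  have hn : (0 : ℝ) < p + q := by positivity
  have hamgm := Real.geom_mean_le_arith_mean2_weighted (w₁ := p / (p + q)) (w₂ := q / (p + q))
    (p₁ := s / p) (p₂ := t / q) (by positivity) (by positivity) (by positivity) (by positivity)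
    (by field_simp)
  have hmean : (p / (p + q) : ℝ) * (s / p) + q / (p + q) * (t / q) = (s + t) / (p + q) := by
    field_simp
  have hpow : ((s / p) ^ (p / (p + q) : ℝ) * (t / q) ^ (q / (p + q) : ℝ)) ^ (p + q) =
      (s / p) ^ p * (t / q) ^ q := by
    rw [mul_pow, ← Real.rpow_natCast, ← Real.rpow_natCast _ (p + q),
      ← Real.rpow_mul (by positivity), ← Real.rpow_mul (by positivity)]
    push_cast
    rw [div_mul_cancel₀ _ hn.ne', div_mul_cancel₀ _ hn.ne', Real.rpow_natCast, Real.rpow_natCast]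
  rw [← hpow, ← hmean]
  exact pow_le_pow_left₀ (by positivity) hamgm _

/-- The maximum of `s ^ p * t ^ q` over `s, t ≥ 0` with `s + t = 4`. -/
noncomputable def powMulPowBound (p q : ℕ) : ℝ :=
  4 ^ (p + q) * (p : ℝ) ^ p * (q : ℝ) ^ q / ((p + q : ℕ) : ℝ) ^ (p + q)

theorem powMulPowBound_comm (p q : ℕ) : powMulPowBound p q = powMulPowBound q p := by
  unfold powMulPowBound
  rw [add_comm p q]
  ring

theorem powMulPowBound_one_add_two_mul (k l : ℕ) :
    powMulPowBound (1 + 2 * k) (1 + 2 * l) =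
      powMulPowBound (1 + 2 * min k l) (1 + 2 * max k l) := by
  rcases le_total k l with h | h
  · rw [min_eq_left h, max_eq_right h]
  · rw [min_eq_right h, max_eq_left h, powMulPowBound_comm]

section SumFour

variable {s t : ℝ} (hs : 0 ≤ s) (ht : 0 ≤ t) (hst : s + t = 4)
include hs ht hst

theorem pow_mul_pow_le_powMulPowBound {p q : ℕ} (hp : 0 < p) (hq : 0 < q) :
    s ^ p * t ^ q ≤ powMulPowBound p q := by
  have h := div_pow_mul_div_pow_le_add_div_pow hs ht hp hq
  rw [hst, div_pow, div_pow, div_pow, div_mul_div_comm,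
    div_le_div_iff₀ (by positivity) (by positivity)] at h
  unfold powMulPowBound
  rw [le_div_iff₀ (by positivity)]
  push_cast
  nlinarith [h]

theorem mul_mul_max_pow_mul_max_pow_le (k l : ℕ) :
    s * t * max 1 s ^ (2 * k) * max 1 t ^ (2 * l) ≤
      max (powMulPowBound (1 + 2 * k) (1 + 2 * l)) (powMulPowBound 1 (1 + 2 * max k l)) := by
  rcases lt_or_ge s 1 with hs1 | hs1
  · have ht1 : 1 ≤ t := by linarith
    calc s * t * max 1 s ^ (2 * k) * max 1 t ^ (2 * l)
        = s ^ 1 * (t * t ^ (2 * l)) := by rw [max_eq_left hs1.le, max_eq_right ht1]; ring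
      _ ≤ s ^ 1 * (t * t ^ (2 * max k l)) := by gcongr; exact le_max_right k l
      _ = s ^ 1 * t ^ (1 + 2 * max k l) := by ring
      _ ≤ powMulPowBound 1 (1 + 2 * max k l) :=
        pow_mul_pow_le_powMulPowBound hs ht hst one_pos (by omega)
      _ ≤ _ := le_max_right _ _
  rcases lt_or_ge t 1 with ht1 | ht1
  · calc s * t * max 1 s ^ (2 * k) * max 1 t ^ (2 * l)
        = t ^ 1 * (s * s ^ (2 * k)) := by rw [max_eq_right hs1, max_eq_left ht1.le]; ring
      _ ≤ t ^ 1 * (s * s ^ (2 * max k l)) := by gcongr; exact le_max_left k l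
      _ = t ^ 1 * s ^ (1 + 2 * max k l) := by ring
      _ ≤ powMulPowBound 1 (1 + 2 * max k l) :=
        pow_mul_pow_le_powMulPowBound ht hs (by linarith) one_pos (by omega)
      _ ≤ _ := le_max_right _ _
  calc s * t * max 1 s ^ (2 * k) * max 1 t ^ (2 * l)
      = s ^ (1 + 2 * k) * t ^ (1 + 2 * l) := by rw [max_eq_right hs1, max_eq_right ht1]; ring
    _ ≤ powMulPowBound (1 + 2 * k) (1 + 2 * l) :=
      pow_mul_pow_le_powMulPowBound hs ht hst (by omega) (by omega)
    _ ≤ _ := le_max_left _ _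

end SumFour

theorem one_sub_two_mul_mul_add_sq_le_max {c : ℝ} (hc : c ∈ Set.Icc 0 1) (x : ℝ) :
    1 - 2 * c * x + c ^ 2 ≤ max 1 (2 * (1 - x)) := by
  have h1 := le_max_left 1 (2 * (1 - x))
  have h2 := le_max_right 1 (2 * (1 - x))
  -- the left side is `(1 - c) * 1 + c * (2 * (1 - x)) - c * (1 - c)`
  nlinarith [hc.1, hc.2, mul_nonneg hc.1 (sub_nonneg.2 hc.2)]

theorem norm_one_sub_ofReal_mul_exp_sq (c θ : ℝ) :
    ‖1 - (c : ℂ) * Complex.exp (θ * Complex.I)‖ ^ 2 = 1 - 2 * c * Real.cos θ + c ^ 2 := by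
  rw [Complex.sq_norm, Complex.normSq_apply]
  simp only [Complex.sub_re, Complex.sub_im, Complex.one_re, Complex.one_im, Complex.mul_re,
    Complex.mul_im, Complex.ofReal_re, Complex.ofReal_im, Complex.exp_ofReal_mul_I_re,
    Complex.exp_ofReal_mul_I_im]
  linear_combination c ^ 2 * Real.sin_sq_add_cos_sq θ

theorem norm_one_sub_exp_neg_two_mul_sq (θ : ℝ) :
    ‖1 - Complex.exp (-2 * θ * Complex.I)‖ ^ 2 =
      2 * (1 - Real.cos θ) * (2 * (1 + Real.cos θ)) := by
  have h := norm_one_sub_ofReal_mul_exp_sq 1 (-2 * θ)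
  rw [Complex.ofReal_one, one_mul, Complex.ofReal_mul, Complex.ofReal_neg,
    Complex.ofReal_ofNat] at h
  rw [h, neg_mul, Real.cos_neg, Real.cos_two_mul]
  ring

theorem norm_one_sub_ofReal_mul_exp_sq_le {c : ℝ} (hc : c ∈ Set.Icc (-1) 1) (θ : ℝ) :
    ‖1 - (c : ℂ) * Complex.exp (θ * Complex.I)‖ ^ 2 ≤
      (if 0 < c then max 1 (2 * (1 - Real.cos θ)) else 1) *
        (if c < 0 then max 1 (2 * (1 + Real.cos θ)) else 1) := by
  rw [norm_one_sub_ofReal_mul_exp_sq]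
  rcases lt_trichotomy c 0 with hneg | rfl | hpos
  · rw [if_neg hneg.not_gt, if_pos hneg, one_mul]
    have := one_sub_two_mul_mul_add_sq_le_max ⟨neg_nonneg.2 hneg.le, neg_le.1 hc.1⟩ (-Real.cos θ)
    convert this using 1 <;> ring_nf
  · simp
  · rw [if_pos hpos, if_neg hpos.not_gt, mul_one]
    exact one_sub_two_mul_mul_add_sq_le_max ⟨hpos.le, hc.2⟩ _

theorem prod_norm_one_sub_ofReal_mul_exp_pow_four_le {ι : Type*} (s : Finset ι) {c : ι → ℝ}
    (hc : ∀ i, c i ∈ Set.Icc (-1) 1) (θ : ℝ) :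
    ∏ i ∈ s, ‖1 - (c i : ℂ) * Complex.exp (θ * Complex.I)‖ ^ 4 ≤
      max 1 (2 * (1 - Real.cos θ)) ^ (2 * #(s.filter (fun i => 0 < c i))) *
        max 1 (2 * (1 + Real.cos θ)) ^ (2 * #(s.filter (fun i => c i < 0))) := by
  have hsq : ∏ i ∈ s, ‖1 - (c i : ℂ) * Complex.exp (θ * Complex.I)‖ ^ 2 ≤
      ∏ i ∈ s, (if 0 < c i then max 1 (2 * (1 - Real.cos θ)) else 1) *
        (if c i < 0 then max 1 (2 * (1 + Real.cos θ)) else 1) :=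
    prod_le_prod (fun _ _ => by positivity)
      (fun i _ => norm_one_sub_ofReal_mul_exp_sq_le (hc i) θ)
  simp only [prod_mul_distrib, prod_ite, prod_const, one_pow, mul_one] at hsq
  calc ∏ i ∈ s, ‖1 - (c i : ℂ) * Complex.exp (θ * Complex.I)‖ ^ 4
      = (∏ i ∈ s, ‖1 - (c i : ℂ) * Complex.exp (θ * Complex.I)‖ ^ 2) ^ 2 := by
        rw [← prod_pow]; simp_rw [← pow_mul]
    _ ≤ (max 1 (2 * (1 - Real.cos θ)) ^ #(s.filter (fun i => 0 < c i)) *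
          max 1 (2 * (1 + Real.cos θ)) ^ #(s.filter (fun i => c i < 0))) ^ 2 := by gcongr
    _ = _ := by ring

theorem B_r_bound (r : ℕ) (θ : ℝ) (c : Fin r → ℝ)
    (hc : ∀ m, c m ∈ Set.Icc (-1 : ℝ) 1)
    (dpos dneg : ℕ)
    (hdpos : dpos = (Finset.univ.filter (fun m : Fin r => 0 < c m)).card)
    (hdneg : dneg = (Finset.univ.filter (fun m : Fin r => c m < 0)).card)
    (a b f : ℕ)
    (ha : a = 1 + 2 * min dpos dneg)
    (hb : (b : ℤ) = 2 * |(dpos : ℤ) - (dneg : ℤ)|)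
    (hf : f = 2 * max dpos dneg) :
    ‖1 - Complex.exp (-2 * θ * Complex.I)‖ ^ 2 *
      ∏ m : Fin r, ‖1 - (c m : ℂ) * Complex.exp (θ * Complex.I)‖ ^ 4 ≤
    max ((4 : ℝ) ^ (2 * a + b) * (a : ℝ) ^ a * ((a : ℝ) + b) ^ (a + b) /
          ((2 * a + b : ℕ) : ℝ) ^ (2 * a + b))
        ((4 : ℝ) ^ (2 + f) * ((1 : ℝ) + f) ^ (1 + f) / ((2 + f : ℕ) : ℝ) ^ (2 + f)) := by
  have hab : a + b = 1 + 2 * max dpos dneg := by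
    rcases le_total dpos dneg with h | h
    · rw [abs_of_nonpos (by omega)] at hb; omega
    · rw [abs_of_nonneg (by omega)] at hb; omega
  have hcos := Real.cos_mem_Icc θ
  calc _ ≤ ‖1 - Complex.exp (-2 * θ * Complex.I)‖ ^ 2 *
          (max 1 (2 * (1 - Real.cos θ)) ^ (2 * dpos) *
            max 1 (2 * (1 + Real.cos θ)) ^ (2 * dneg)) := by
        rw [hdpos, hdneg]
        gcongr
        exact prod_norm_one_sub_ofReal_mul_exp_pow_four_le univ hc θ
    _ ≤ max (powMulPowBound (1 + 2 * dpos) (1 + 2 * dneg))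
          (powMulPowBound 1 (1 + 2 * max dpos dneg)) := by
        rw [norm_one_sub_exp_neg_two_mul_sq, ← mul_assoc]
        exact mul_mul_max_pow_mul_max_pow_le (by linarith [hcos.2]) (by linarith [hcos.1])
          (by ring) dpos dneg
    _ = max (powMulPowBound a (a + b)) (powMulPowBound 1 (1 + f)) := by
        rw [powMulPowBound_one_add_two_mul, hab, ha, hf]
    _ = _ := by
        simp only [powMulPowBound]
        rw [show a + (a + b) = 2 * a + b by omega, show 1 + (1 + f) = 2 + f by omega]
        push_cast
        ring_nf
end

section
/- Let a, b, x be real numbers with 0 < a ≤ b and x > 0. Set c_a := min(a/x, x/a) and c_b := min(b/x, x/b). Then (1 + c_a)(1 + c_b)(1 − a/b) ≤ 2. -/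
theorem one_add_c_mul_bound (a b x : ℝ) (ha : 0 < a) (hab : a ≤ b) (hx : 0 < x) :
    (1 + min (a / x) (x / a)) * (1 + min (b / x) (x / b)) * (1 - a / b) ≤ 2 := by
  have hb : 0 < b := lt_of_lt_of_le ha hab
  set ca := min (a / x) (x / a) with hca
  set cb := min (b / x) (x / b) with hcb
  have hca0 : 0 < ca := lt_min (by positivity) (by positivity)
  have hcb0 : 0 < cb := lt_min (by positivity) (by positivity)
  have hca1 : ca ≤ 1 := by
    rcases le_total a x with h | h
    · exact le_trans (min_le_left _ _) ((div_le_one hx).mpr h)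
    · exact le_trans (min_le_right _ _) ((div_le_one ha).mpr h)
  have hcb1 : cb ≤ 1 := by
    rcases le_total b x with h | h
    · exact le_trans (min_le_left _ _) ((div_le_one hx).mpr h)
    · exact le_trans (min_le_right _ _) ((div_le_one hb).mpr h)
  have hprod : ca * cb ≤ a / b := by
    have h1 : ca * cb ≤ (a / x) * (x / b) :=
      mul_le_mul (min_le_left _ _) (min_le_right _ _) hcb0.le (by positivity)
    have h2 : (a / x) * (x / b) = a / b := by field_simp
    linarith [h1, h2 ▸ h1]
  have hab1 : a / b ≤ 1 := (div_le_one hb).mpr hab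
  have hab0 : 0 < a / b := by positivity
  nlinarith [mul_nonneg (sub_nonneg.mpr hca1) (sub_nonneg.mpr hcb1),
    mul_nonneg hab0.le (sub_nonneg.mpr hab1), sub_nonneg.mpr hab1, hprod]
end
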